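/- arXiv:1605.08550 — 7 statements merged into one kernel-verified Lean document; each statement's English description precedes it below -/
import Mathlib

section
/- For the surface of revolution in ℝ³ parameterized by X(ρ,v) = (ρ cos v, ρ sin v, t(ρ)) with t'(ρ) = 1/√(C₁ρ^{2/3}−1), the mean curvature function equals f(ρ) = 2/(3√C₁ · ρ^{4/3}), which is positive for all ρ > C₁^{−3/2}. -/
open Real Set

/-!
The mean curvature of a surface of revolution with profile slope `t'` is in divergence form,
`ρ f(ρ) = d/dρ (ρ sin φ)` with `sin φ = t' / √(1 + t'²)`. For `t' = 1/√(C₁ρ^{2/3} − 1)` one has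
`sin φ = 1/√(C₁ρ^{2/3})`, so `ρ sin φ = ρ^{2/3}/√C₁`, whose derivative `2/(3√C₁ ρ^{1/3})`
gives `f` after division by `ρ`.
-/

section SinAngle

variable {g : ℝ → ℝ} {g' ρ : ℝ}

theorem HasDerivAt.div_sqrt_one_add_sq (hg : HasDerivAt g g' ρ) :
    HasDerivAt (fun x => g x / √(1 + g x ^ 2)) (g' * (1 + g ρ ^ 2) ^ (-(3:ℝ)/2)) ρ := by
  have hpos : 0 < 1 + g ρ ^ 2 := by positivity
  have hsqrt := ((hg.pow 2).const_add 1).sqrt hpos.ne'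
  refine (hg.div hsqrt (Real.sqrt_pos.mpr hpos).ne').congr_deriv ?_
  rw [show (-(3:ℝ)/2) = -1 - 1/2 by norm_num, Real.rpow_sub hpos, Real.rpow_neg_one,
    ← Real.sqrt_eq_rpow]
  have hsq := Real.sq_sqrt hpos.le
  simp only [Pi.pow_apply]
  field_simp
  rw [hsq]
  ring

theorem HasDerivAt.mul_div_sqrt_one_add_sq (hg : HasDerivAt g g' ρ) (hρ : ρ ≠ 0) :
    HasDerivAt (fun x => x * (g x / √(1 + g x ^ 2)))
      (ρ * ((1 + g ρ ^ 2) ^ (-(3:ℝ)/2) * (g' + g ρ * (1 + g ρ ^ 2) / ρ))) ρ := by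
  have hpos : 0 < 1 + g ρ ^ 2 := by positivity
  refine ((hasDerivAt_id' ρ).mul hg.div_sqrt_one_add_sq).congr_deriv ?_
  rw [show (-(3:ℝ)/2) = -1 - 1/2 by norm_num, Real.rpow_sub hpos, Real.rpow_neg_one,
    ← Real.sqrt_eq_rpow]
  field_simp
  ring

end SinAngle

theorem inv_sqrt_div_sqrt_one_add_sq {u : ℝ} (hu : 0 < u) :
    1 / √u / √(1 + (1 / √u) ^ 2) = 1 / √(u + 1) := by
  rw [div_pow, one_pow, Real.sq_sqrt hu.le, one_add_div hu.ne', Real.sqrt_div' _ hu.le, add_comm]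
  field_simp

theorem one_lt_mul_rpow_two_div_three_iff {C ρ : ℝ} (hC : 0 < C) (hρ : 0 < ρ) :
    1 < C * ρ ^ ((2:ℝ)/3) ↔ C ^ (-(3:ℝ)/2) < ρ := by
  rw [← Real.rpow_lt_rpow_iff (Real.rpow_nonneg hC.le _) hρ.le (by norm_num : (0:ℝ) < 2/3),
    ← Real.rpow_mul hC.le, ← div_lt_iff₀' hC]
  norm_num [Real.rpow_neg_one]

theorem div_sqrt_rpow_two_div_three {x : ℝ} (hx : 0 < x) :
    x / √(x ^ ((2:ℝ)/3)) = x ^ ((2:ℝ)/3) := by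
  rw [Real.sqrt_eq_rpow, ← Real.rpow_mul hx.le, div_eq_iff (by positivity), ← Real.rpow_add hx]
  norm_num

theorem rpow_two_div_three_sub_one_div {x : ℝ} (hx : 0 < x) (c : ℝ) :
    2 / 3 * x ^ ((2:ℝ)/3 - 1) / c / x = 2 / (3 * c * x ^ ((4:ℝ)/3)) := by
  rw [Real.rpow_sub_one hx.ne', show (4:ℝ)/3 = 2 - 2/3 by norm_num, Real.rpow_sub hx, Real.rpow_two]
  field_simp

/-- for the surface of revolution `(ρ cos v, ρ sin v, t ρ)` with
`t'(ρ) = 1/√(C₁ ρ^{2/3} − 1)`, the mean curvature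
`f(ρ) = (1+(t')²)^{-3/2}·(t'' + t'(1+(t')²)/ρ)` equals `2/(3 √C₁ ρ^{4/3}) > 0`. -/
theorem mean_curvature_revolution (C₁ : ℝ) (hC₁ : 0 < C₁)
    (t' : ℝ → ℝ)
    (ht' : ∀ ρ, t' ρ = 1 / Real.sqrt (C₁ * ρ ^ ((2:ℝ)/3) - 1)) :
    ∀ ρ ∈ Ioi (C₁ ^ (-(3:ℝ)/2)),
      (1 + (t' ρ) ^ 2) ^ (-(3:ℝ)/2) *
          (deriv t' ρ + t' ρ * (1 + (t' ρ) ^ 2) / ρ)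
        = 2 / (3 * Real.sqrt C₁ * ρ ^ ((4:ℝ)/3)) ∧
      0 < 2 / (3 * Real.sqrt C₁ * ρ ^ ((4:ℝ)/3)) := by
  have hpos : ∀ x ∈ Ioi (C₁ ^ (-(3:ℝ)/2)), 0 < x := fun x hx =>
    (Real.rpow_pos_of_pos hC₁ _).trans hx
  have hgt : ∀ x ∈ Ioi (C₁ ^ (-(3:ℝ)/2)), 1 < C₁ * x ^ ((2:ℝ)/3) := fun x hx =>
    (one_lt_mul_rpow_two_div_three_iff hC₁ (hpos x hx)).mpr hx
  have hprofile : ∀ x ∈ Ioi (C₁ ^ (-(3:ℝ)/2)),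
      x * (t' x / √(1 + t' x ^ 2)) = x ^ ((2:ℝ)/3) / √C₁ := fun x hx => by
    rw [ht', inv_sqrt_div_sqrt_one_add_sq (sub_pos.mpr (hgt x hx)), sub_add_cancel,
      Real.sqrt_mul hC₁.le, mul_one_div, div_mul_eq_div_div_swap,
      div_sqrt_rpow_two_div_three (hpos x hx)]
  intro ρ hρ
  have hρ0 := hpos ρ hρ
  have hdiff : DifferentiableAt ℝ t' ρ := by
    rw [show t' = fun x => 1 / √(C₁ * x ^ ((2:ℝ)/3) - 1) from funext ht']
    have := hgt ρ hρ
    fun_prop (disch := first | positivity | linarith)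
  have hdivergence := hdiff.hasDerivAt.mul_div_sqrt_one_add_sq hρ0.ne'
  have hprofile_deriv : HasDerivAt (fun x => x * (t' x / √(1 + t' x ^ 2)))
      (2 / 3 * ρ ^ ((2:ℝ)/3 - 1) / √C₁) ρ :=
    ((Real.hasDerivAt_rpow_const (Or.inl hρ0.ne')).div_const _).congr_of_eventuallyEq
      (Filter.eventually_of_mem (Ioi_mem_nhds hρ) hprofile)
  refine ⟨?_, by positivity⟩
  rw [← rpow_two_div_three_sub_one_div hρ0, ← hdivergence.unique hprofile_deriv]
  field_simp
end

section
/- Let L(k) = −16/9 − 16k² + C₁k^{3/2} for k > 0. If C₁ > 64/3^{5/4}, then there exist exactly two points 0 < k₀₁ < (3C₁/64)² < k₀₂ with L(k₀₁) = L(k₀₂) = 0, and L(k) > 0 for all k ∈ (k₀₁, k₀₂). -/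
open Real Set

/-!
Substituting `k = t²` turns `L` into the quartic `q(t) = C₁ t³ - 16 t⁴ - 16/9`, whose derivative
`t² (3 C₁ - 64 t)` makes it increase on `[0, 3C₁/64]` and decrease afterwards. Since
`q(0) = q(C₁/16) = -16/9 < 0` and the peak value `q(3C₁/64) = 27 C₁⁴ / 2²⁰ - 16/9` is positive
exactly when `C₁ > 64 / 3^{5/4}`, the quartic has one zero on each side of its peak, is positive
between them and vanishes nowhere else on `[0, ∞)`.
-/

section Unimodal

variable {f : ℝ → ℝ} {a m b x₁ x₂ x c : ℝ}

theorem exists_zeros_of_neg_pos_neg (hf : ContinuousOn f (Icc a b)) (ham : a ≤ m) (hmb : m ≤ b)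
    (ha : f a < 0) (hm : 0 < f m) (hb : f b < 0) :
    ∃ x₁ ∈ Ioo a m, ∃ x₂ ∈ Ioo m b, f x₁ = 0 ∧ f x₂ = 0 := by
  obtain ⟨x₁, hx₁, h₁⟩ :=
    intermediate_value_Ioo ham (hf.mono (Icc_subset_Icc_right hmb)) ⟨ha, hm⟩
  obtain ⟨x₂, hx₂, h₂⟩ :=
    intermediate_value_Ioo' hmb (hf.mono (Icc_subset_Icc_left ham)) ⟨hb, hm⟩
  exact ⟨x₁, hx₁, x₂, hx₂, h₁, h₂⟩

theorem lt_of_mem_Ioo_of_unimodal (hmono : StrictMonoOn f (Icc a m))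
    (hanti : StrictAntiOn f (Ici m)) (hx₁ : x₁ ∈ Icc a m) (hx₂ : m ≤ x₂) (h₁ : f x₁ = c)
    (h₂ : f x₂ = c) (hx : x ∈ Ioo x₁ x₂) : c < f x := by
  rcases le_or_gt x m with hxm | hmx
  · exact h₁ ▸ hmono hx₁ ⟨hx₁.1.trans hx.1.le, hxm⟩ hx.1
  · exact h₂ ▸ hanti hmx.le hx₂ hx.2

theorem eq_or_eq_of_unimodal (hmono : StrictMonoOn f (Icc a m))
    (hanti : StrictAntiOn f (Ici m)) (hx₁ : x₁ ∈ Icc a m) (hx₂ : m ≤ x₂) (h₁ : f x₁ = c)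
    (h₂ : f x₂ = c) (hax : a ≤ x) (hx : f x = c) : x = x₁ ∨ x = x₂ := by
  rcases le_or_gt x m with hxm | hmx
  · exact Or.inl (hmono.injOn ⟨hax, hxm⟩ hx₁ (hx.trans h₁.symm))
  · exact Or.inr (hanti.injOn hmx.le hx₂ (hx.trans h₂.symm))

end Unimodal

noncomputable def quartic (C t : ℝ) : ℝ := C * t ^ 3 - 16 * t ^ 4 - 16 / 9

section Quartic

variable {C : ℝ}

theorem continuous_quartic (C : ℝ) : Continuous (quartic C) := by
  unfold quartic; fun_prop

theorem hasDerivAt_quartic (C t : ℝ) :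
    HasDerivAt (quartic C) (t ^ 2 * (3 * C - 64 * t)) t := by
  have h := (((hasDerivAt_pow 3 t).const_mul C).sub
    ((hasDerivAt_pow 4 t).const_mul 16)).sub_const (16 / 9)
  exact h.congr_deriv (by push_cast; ring)

theorem strictMonoOn_quartic (C : ℝ) : StrictMonoOn (quartic C) (Icc 0 (3 * C / 64)) := by
  refine strictMonoOn_of_deriv_pos (convex_Icc _ _) (continuous_quartic C).continuousOn ?_
  intro t ht
  rw [interior_Icc, mem_Ioo] at ht
  rw [(hasDerivAt_quartic C t).deriv]
  exact mul_pos (pow_pos ht.1 2) (by linarith)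

theorem strictAntiOn_quartic (hC : 0 ≤ C) : StrictAntiOn (quartic C) (Ici (3 * C / 64)) := by
  refine strictAntiOn_of_deriv_neg (convex_Ici _) (continuous_quartic C).continuousOn ?_
  intro t ht
  rw [interior_Ici, mem_Ioi] at ht
  rw [(hasDerivAt_quartic C t).deriv]
  have ht₀ : 0 < t := by linarith
  exact mul_neg_of_pos_of_neg (pow_pos ht₀ 2) (by linarith)

theorem quartic_zero (C : ℝ) : quartic C 0 = -16 / 9 := by
  norm_num [quartic]

theorem quartic_div_sixteen (C : ℝ) : quartic C (C / 16) = -16 / 9 := by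
  unfold quartic; ring

theorem quartic_peak_pos (hC : 64 / (3 : ℝ) ^ ((5 : ℝ) / 4) < C) : 0 < quartic C (3 * C / 64) := by
  have h3 : 0 < (3 : ℝ) ^ ((5 : ℝ) / 4) := by positivity
  have h243 : ((3 : ℝ) ^ ((5 : ℝ) / 4)) ^ 4 = 243 := by
    rw [← rpow_natCast, ← rpow_mul (by norm_num)]; norm_num
  have hC4 : 64 ^ 4 / 243 < C ^ 4 := by
    calc (64 : ℝ) ^ 4 / 243 = (64 / (3 : ℝ) ^ ((5 : ℝ) / 4)) ^ 4 := by rw [div_pow, h243]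
      _ < C ^ 4 := by gcongr
  have hpeak : quartic C (3 * C / 64) = 27 * C ^ 4 / 2 ^ 20 - 16 / 9 := by
    unfold quartic; ring
  rw [hpeak]
  linarith

theorem eq_quartic_sqrt {L : ℝ → ℝ} (hL : ∀ k, L k = -16/9 - 16 * k ^ 2 + C * k ^ ((3:ℝ)/2))
    {k : ℝ} (hk : 0 ≤ k) : L k = quartic C √k := by
  have h32 : k ^ ((3 : ℝ) / 2) = √k ^ 3 := by
    rw [rpow_div_two_eq_sqrt _ hk, ← rpow_natCast]; norm_num
  rw [hL, h32, quartic, ← sq_sqrt hk]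
  simp only [sqrt_sq (sqrt_nonneg k)]
  ring

end Quartic

/-- `L(k) = −16/9 − 16k² + C₁ k^{3/2}` on `(0,∞)`, with `C₁ > 64/3^{5/4}`,
has exactly two zeros `0 < k₀₁ < (3C₁/64)² < k₀₂`, and `L > 0` on `(k₀₁, k₀₂)`. -/
theorem L_two_zeros (C₁ : ℝ) (hC₁ : C₁ > 64 / (3:ℝ) ^ ((5:ℝ)/4))
    (L : ℝ → ℝ)
    (hL : ∀ k, L k = -16/9 - 16 * k ^ 2 + C₁ * k ^ ((3:ℝ)/2)) :
    ∃ k₀₁ k₀₂ : ℝ,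
      0 < k₀₁ ∧ k₀₁ < (3 * C₁ / 64) ^ 2 ∧ (3 * C₁ / 64) ^ 2 < k₀₂ ∧
      L k₀₁ = 0 ∧ L k₀₂ = 0 ∧
      (∀ k ∈ Ioo k₀₁ k₀₂, 0 < L k) ∧
      (∀ k : ℝ, 0 < k → L k = 0 → k = k₀₁ ∨ k = k₀₂) := by
  have hC : 0 < C₁ := lt_trans (by positivity) hC₁
  obtain ⟨t₁, ht₁, t₂, ht₂, h₁, h₂⟩ :=
    exists_zeros_of_neg_pos_neg (continuous_quartic C₁).continuousOn
      (by positivity : (0 : ℝ) ≤ 3 * C₁ / 64) (by linarith : 3 * C₁ / 64 ≤ C₁ / 16)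
      (by norm_num [quartic_zero]) (quartic_peak_pos hC₁) (by norm_num [quartic_div_sixteen])
  have hmono := strictMonoOn_quartic C₁
  have hanti := strictAntiOn_quartic hC.le
  have ht₁' : t₁ ∈ Icc 0 (3 * C₁ / 64) := Ioo_subset_Icc_self ht₁
  have hL_sq : ∀ t, 0 ≤ t → L (t ^ 2) = quartic C₁ t := fun t ht => by
    rw [eq_quartic_sqrt hL (sq_nonneg t), sqrt_sq ht]
  refine ⟨t₁ ^ 2, t₂ ^ 2, pow_pos ht₁.1 2, pow_lt_pow_left₀ ht₁.2 ht₁.1.le two_ne_zero,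
    pow_lt_pow_left₀ ht₂.1 (by positivity) two_ne_zero, (hL_sq t₁ ht₁.1.le).trans h₁,
    (hL_sq t₂ (by linarith [ht₂.1])).trans h₂, fun k hk => ?_, fun k hk hLk => ?_⟩
  · have hk₀ : 0 < k := (pow_pos ht₁.1 2).trans hk.1
    rw [eq_quartic_sqrt hL hk₀.le]
    exact lt_of_mem_Ioo_of_unimodal hmono hanti ht₁' ht₂.1.le h₁ h₂
      ⟨(lt_sqrt ht₁.1.le).2 hk.1, (sqrt_lt' (by linarith [ht₂.1])).2 hk.2⟩
  · rw [eq_quartic_sqrt hL hk.le] at hLk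
    rcases eq_or_eq_of_unimodal hmono hanti ht₁' ht₂.1.le h₁ h₂ (sqrt_nonneg k) hLk with h | h
    · exact Or.inl (by rw [← h, sq_sqrt hk.le])
    · exact Or.inr (by rw [← h, sq_sqrt hk.le])
end

section
/- Every solution φ of the ODE 3φ''' + 2φ'φ'' = 0 on an open interval with φ'' > 0 everywhere is, up to translation of the variable and addition of a constant and rescaling u ↦ u/3, of the form φ(u) = 3·log(cosh(u/3)) + b. -/
/-!
`3φ'' + φ'²` is a first integral of the equation, a positive constant `a²` because `φ'' > 0`.
The substitution `F = exp (φ / 3)` turns `3φ'' + φ'² = a²` into the linear first-order system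
`F' = (a/3) G`, `G' = (a/3) F` with `G = F φ' / a`, so
`F = A e^{a(u - x)/3} + B e^{-a(u - x)/3}` with `A, B = F(x) (1 ± φ'(x)/a) / 2`.
Both coefficients are positive since `φ'(x)² < a²`, so `F` is a positive multiple of a translate
of `cosh (a u / 3)`, and taking logarithms gives the claim.
-/

open Real Set

theorem IsOpen.eq_of_hasDerivAt_zero {𝕜 G : Type*} [RCLike 𝕜] [NormedAddCommGroup G]
    [NormedSpace 𝕜 G] {s : Set 𝕜} (hs : IsOpen s) (hs' : IsPreconnected s) {f : 𝕜 → G}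
    (hf : ∀ u ∈ s, HasDerivAt f 0 u) {x y : 𝕜} (hx : x ∈ s) (hy : y ∈ s) : f x = f y :=
  hs.is_const_of_deriv_eq_zero hs' (fun u hu => (hf u hu).differentiableAt.differentiableWithinAt)
    (fun u hu => (hf u hu).deriv) hx hy

theorem ContDiffOn.hasDerivAt_deriv {𝕜 : Type*} [NontriviallyNormedField 𝕜] {n : WithTop ℕ∞}
    {f : 𝕜 → 𝕜} {s : Set 𝕜} (hf : ContDiffOn 𝕜 n f s) (hs : IsOpen s) (hn : n ≠ 0) {x : 𝕜}
    (hx : x ∈ s) : HasDerivAt f (deriv f x) x :=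
  ((hf.differentiableOn hn).differentiableAt (hs.mem_nhds hx)).hasDerivAt

theorem eq_exp_add_exp_of_hasDerivAt {I : Set ℝ} (hI : IsOpen I) (hIc : IsPreconnected I)
    {F G : ℝ → ℝ} {μ x : ℝ} (hF : ∀ u ∈ I, HasDerivAt F (μ * G u) u)
    (hG : ∀ u ∈ I, HasDerivAt G (μ * F u) u) (hx : x ∈ I) :
    ∀ u ∈ I, F u = (F x + G x) / 2 * exp (μ * (u - x)) +
      (F x - G x) / 2 * exp (-(μ * (u - x))) := by
  have hexp : ∀ (c u : ℝ), HasDerivAt (fun v => exp (c * (v - x))) (exp (c * (u - x)) * c) u :=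
    fun c u => by simpa using (((hasDerivAt_id u).sub_const x).const_mul c).exp
  have hplus : ∀ u ∈ I, (F u + G u) * exp (-μ * (u - x)) = F x + G x := by
    intro u hu
    have := hI.eq_of_hasDerivAt_zero hIc (f := fun v => (F v + G v) * exp (-μ * (v - x)))
      (fun v hv => ?_) hu hx
    · simpa using this
    refine (((hF v hv).add (hG v hv)).mul (hexp (-μ) v)).congr_deriv ?_
    simp only [Pi.add_apply]
    ring
  have hminus : ∀ u ∈ I, (F u - G u) * exp (μ * (u - x)) = F x - G x := by
    intro u hu
    have := hI.eq_of_hasDerivAt_zero hIc (f := fun v => (F v - G v) * exp (μ * (v - x)))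
      (fun v hv => ?_) hu hx
    · simpa using this
    refine (((hF v hv).sub (hG v hv)).mul (hexp μ v)).congr_deriv ?_
    simp only [Pi.sub_apply]
    ring
  intro u hu
  rw [← hplus u hu, ← hminus u hu, ← neg_mul]
  have hinv : exp (-μ * (u - x)) * exp (μ * (u - x)) = 1 := by rw [← exp_add]; simp
  linear_combination -F u * hinv

theorem exists_mul_cosh_eq {A B : ℝ} (hA : 0 < A) (hB : 0 < B) :
    ∃ s₀ c : ℝ, 0 < c ∧ ∀ s, A * exp s + B * exp (-s) = c * cosh (s - s₀) := by
  refine ⟨(log B - log A) / 2, 2 * exp ((log A + log B) / 2), by positivity, fun s => ?_⟩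
  conv_lhs => rw [← exp_log hA, ← exp_log hB, ← exp_add, ← exp_add]
  rw [cosh_eq, show ∀ c x y : ℝ, 2 * c * ((x + y) / 2) = c * x + c * y by intros; ring,
    ← exp_add, ← exp_add]
  ring_nf

noncomputable def firstIntegral (φ : ℝ → ℝ) (u : ℝ) : ℝ :=
  3 * deriv (deriv φ) u + deriv φ u ^ 2

theorem firstIntegral_eq {I : Set ℝ} (hI : IsOpen I) (hIc : IsPreconnected I) {φ : ℝ → ℝ}
    (hφ : ContDiffOn ℝ 3 φ I)
    (hode : ∀ u ∈ I, 3 * deriv (deriv (deriv φ)) u + 2 * deriv φ u * deriv (deriv φ) u = 0)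
    {x u : ℝ} (hx : x ∈ I) (hu : u ∈ I) : firstIntegral φ u = firstIntegral φ x := by
  have hφ' : ContDiffOn ℝ 2 (deriv φ) I := hφ.deriv_of_isOpen hI (by norm_num)
  have hφ'' : ContDiffOn ℝ 1 (deriv (deriv φ)) I := hφ'.deriv_of_isOpen hI (by norm_num)
  refine hI.eq_of_hasDerivAt_zero hIc (fun v hv => ?_) hu hx
  refine (((hφ''.hasDerivAt_deriv hI one_ne_zero hv).const_mul 3).add
    ((hφ'.hasDerivAt_deriv hI two_ne_zero hv).pow 2)).congr_deriv ?_
  linear_combination hode v hv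

theorem sq_deriv_lt_firstIntegral {φ : ℝ → ℝ} {x : ℝ} (h : 0 < deriv (deriv φ) x) :
    deriv φ x ^ 2 < firstIntegral φ x := by
  unfold firstIntegral
  linarith

section ExpSubstitution

variable {φ : ℝ → ℝ} {u a : ℝ}

theorem hasDerivAt_exp_div_three (ha : a ≠ 0) (hφ : HasDerivAt φ (deriv φ u) u) :
    HasDerivAt (fun v => exp (φ v / 3)) (a / 3 * (exp (φ u / 3) * (deriv φ u / a))) u := by
  refine (hφ.div_const 3).exp.congr_deriv ?_
  field_simp

theorem hasDerivAt_exp_div_three_mul_deriv (ha : a ≠ 0) (hφ : HasDerivAt φ (deriv φ u) u)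
    (hφ' : HasDerivAt (deriv φ) (deriv (deriv φ) u) u) (hC : firstIntegral φ u = a ^ 2) :
    HasDerivAt (fun v => exp (φ v / 3) * (deriv φ v / a)) (a / 3 * exp (φ u / 3)) u := by
  refine ((hφ.div_const 3).exp.mul (hφ'.div_const a)).congr_deriv ?_
  unfold firstIntegral at hC
  field_simp
  linear_combination hC

theorem exp_div_three_eq_exp_add_exp {I : Set ℝ} (hI : IsOpen I) (hIc : IsPreconnected I)
    (hφ : ContDiffOn ℝ 3 φ I)
    (hode : ∀ u ∈ I, 3 * deriv (deriv (deriv φ)) u + 2 * deriv φ u * deriv (deriv φ) u = 0)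
    {x : ℝ} (hx : x ∈ I) (ha : a ≠ 0) (hC : firstIntegral φ x = a ^ 2) :
    ∀ u ∈ I, exp (φ u / 3) =
      (exp (φ x / 3) + exp (φ x / 3) * (deriv φ x / a)) / 2 * exp (a / 3 * (u - x)) +
      (exp (φ x / 3) - exp (φ x / 3) * (deriv φ x / a)) / 2 * exp (-(a / 3 * (u - x))) := by
  have hφ' : ContDiffOn ℝ 2 (deriv φ) I := hφ.deriv_of_isOpen hI (by norm_num)
  refine eq_exp_add_exp_of_hasDerivAt hI hIc
    (fun u hu => hasDerivAt_exp_div_three ha (hφ.hasDerivAt_deriv hI three_ne_zero hu))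
    (fun u hu => hasDerivAt_exp_div_three_mul_deriv ha
      (hφ.hasDerivAt_deriv hI three_ne_zero hu) (hφ'.hasDerivAt_deriv hI two_ne_zero hu)
      ((firstIntegral_eq hI hIc hφ hode hx hu).trans hC)) hx

end ExpSubstitution

/-- every `C³` solution of `3φ''' + 2φ'φ'' = 0` with `φ'' > 0` on an open
interval is, up to a translation of the variable, a rescaling `u ↦ u/3` (by a nonzero
factor `a`), and addition of a constant, of the form `φ(u) = 3 log(cosh(u/3)) + b`. -/
theorem ode_solution_form (I : Set ℝ) (hI : IsOpen I) (hI' : I.OrdConnected)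
    (φ : ℝ → ℝ) (hφ : ContDiffOn ℝ 3 φ I)
    (hode : ∀ u ∈ I, 3 * deriv (deriv (deriv φ)) u + 2 * deriv φ u * deriv (deriv φ) u = 0)
    (hconv : ∀ u ∈ I, 0 < deriv (deriv φ) u) :
    ∃ a u₀ b : ℝ, a ≠ 0 ∧
      ∀ u ∈ I, φ u = 3 * Real.log (Real.cosh (a * (u - u₀) / 3)) + b := by
  rcases I.eq_empty_or_nonempty with rfl | ⟨x, hx⟩
  · exact ⟨1, 0, 0, one_ne_zero, fun u hu => hu.elim⟩
  have hsq := sq_deriv_lt_firstIntegral (hconv x hx)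
  have hC : 0 < firstIntegral φ x := (sq_nonneg _).trans_lt hsq
  set a := √(firstIntegral φ x)
  have ha : 0 < a := sqrt_pos.mpr hC
  have hF := exp_div_three_eq_exp_add_exp hI hI'.isPreconnected hφ hode hx ha.ne'
    (sq_sqrt hC.le).symm
  obtain ⟨hlow, hupp⟩ : -1 < deriv φ x / a ∧ deriv φ x / a < 1 := by
    rw [← abs_lt, abs_div, abs_of_pos ha, div_lt_one ha, abs_lt]
    exact sq_lt.mp hsq
  have hE := exp_pos (φ x / 3)
  obtain ⟨s₀, c, hc, hcosh⟩ := exists_mul_cosh_eq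
    (A := (exp (φ x / 3) + exp (φ x / 3) * (deriv φ x / a)) / 2)
    (B := (exp (φ x / 3) - exp (φ x / 3) * (deriv φ x / a)) / 2)
    (by nlinarith) (by nlinarith)
  refine ⟨a, x + 3 * s₀ / a, 3 * log c, ha.ne', fun u hu => ?_⟩
  have h := congrArg log ((hF u hu).trans (hcosh _))
  rw [log_exp, log_mul hc.ne' (cosh_pos _).ne'] at h
  rw [show a * (u - (x + 3 * s₀ / a)) / 3 = a / 3 * (u - x) - s₀ by field_simp; ring]
  linarith
end

section
/- The map X(u,v) = ((√C/3)(cosh u)³ cos 3v, (√C/3)(cosh u)³ sin 3v, (√C/2)((1/2) sinh 2u + u)) from ℝ² to ℝ³ is an isometric immersion of (ℝ², g_C) into Euclidean ℝ³, i.e., the induced metric equals C (cosh u)⁶ (du² + dv²). -/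
/-!
A surface `X(u,v) = (f u cos kv, f u sin kv, h u)` swept out by rotating a profile curve
at angular speed `k` has first fundamental form `(f'² + h'²) du² + k² f² dv²`. For the profile
`f = (√C/3) cosh³`, `h = (√C/2)(½ sinh 2u + u)` with `k = 3`, one has `f' = √C cosh² sinh` and
`h' = √C cosh²`, so both `f'² + h'² = C cosh⁴ (sinh² + 1)` and `9 f²` equal `C cosh⁶`.
-/

open Real Set

theorem hasDerivAt_cos_const_mul (k v : ℝ) :
    HasDerivAt (fun v => cos (k * v)) (-(k * sin (k * v))) v := by
  simpa [mul_comm] using ((hasDerivAt_id v).const_mul k).cos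

theorem hasDerivAt_sin_const_mul (k v : ℝ) :
    HasDerivAt (fun v => sin (k * v)) (k * cos (k * v)) v := by
  simpa [mul_comm] using ((hasDerivAt_id v).const_mul k).sin

section RotationSurface

variable {f : ℝ → ℝ} (h : ℝ → ℝ) (k : ℝ) {u : ℝ} (v : ℝ)

theorem rotationSurface_metric_uu (hf : DifferentiableAt ℝ f u) :
    deriv (fun u => f u * cos (k * v)) u ^ 2 + deriv (fun u => f u * sin (k * v)) u ^ 2
      + deriv h u ^ 2 = deriv f u ^ 2 + deriv h u ^ 2 := by
  rw [deriv_mul_const hf, deriv_mul_const hf]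
  linear_combination deriv f u ^ 2 * cos_sq_add_sin_sq (k * v)

theorem rotationSurface_metric_uv (hf : DifferentiableAt ℝ f u) :
    deriv (fun u => f u * cos (k * v)) u * deriv (fun v => f u * cos (k * v)) v
      + deriv (fun u => f u * sin (k * v)) u * deriv (fun v => f u * sin (k * v)) v
      + deriv h u * deriv (fun _ : ℝ => h u) v = 0 := by
  rw [deriv_mul_const hf, deriv_mul_const hf, ((hasDerivAt_cos_const_mul k v).const_mul _).deriv,
    ((hasDerivAt_sin_const_mul k v).const_mul _).deriv, deriv_const]
  ring

theorem rotationSurface_metric_vv (a b : ℝ) :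
    deriv (fun v => a * cos (k * v)) v ^ 2 + deriv (fun v => a * sin (k * v)) v ^ 2
      + deriv (fun _ : ℝ => b) v ^ 2 = k ^ 2 * a ^ 2 := by
  rw [((hasDerivAt_cos_const_mul k v).const_mul _).deriv,
    ((hasDerivAt_sin_const_mul k v).const_mul _).deriv, deriv_const]
  linear_combination k ^ 2 * a ^ 2 * sin_sq_add_cos_sq (k * v)

end RotationSurface

theorem hasDerivAt_sinh_two_mul_div_two_add_id (u : ℝ) :
    HasDerivAt (fun u => 1 / 2 * sinh (2 * u) + u) (2 * cosh u ^ 2) u := by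
  refine ((((hasDerivAt_id' u).const_mul 2).sinh.const_mul (1 / 2 : ℝ)).add
    (hasDerivAt_id' u)).congr_deriv ?_
  rw [cosh_two_mul, cosh_sq]
  ring

/-- the map
`X(u,v) = ((√C/3)(cosh u)³ cos 3v, (√C/3)(cosh u)³ sin 3v, (√C/2)((1/2) sinh 2u + u))`
induces on `ℝ²` exactly the metric `g_C = C (cosh u)⁶ (du² + dv²)`, i.e.
`⟨X_u,X_u⟩ = C (cosh u)⁶`, `⟨X_u,X_v⟩ = 0`, `⟨X_v,X_v⟩ = C (cosh u)⁶`. -/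
theorem biconservative_immersion_R3 (C : ℝ) (hC : 0 < C)
    (X₁ X₂ X₃ : ℝ → ℝ → ℝ)
    (h₁ : ∀ u v, X₁ u v = (Real.sqrt C / 3) * (Real.cosh u) ^ 3 * Real.cos (3 * v))
    (h₂ : ∀ u v, X₂ u v = (Real.sqrt C / 3) * (Real.cosh u) ^ 3 * Real.sin (3 * v))
    (h₃ : ∀ u v, X₃ u v = (Real.sqrt C / 2) * ((1/2) * Real.sinh (2 * u) + u)) :
    ∀ u v : ℝ,
      (deriv (fun u => X₁ u v) u) ^ 2 + (deriv (fun u => X₂ u v) u) ^ 2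
          + (deriv (fun u => X₃ u v) u) ^ 2 = C * (Real.cosh u) ^ 6 ∧
      deriv (fun u => X₁ u v) u * deriv (fun v => X₁ u v) v
          + deriv (fun u => X₂ u v) u * deriv (fun v => X₂ u v) v
          + deriv (fun u => X₃ u v) u * deriv (fun v => X₃ u v) v = 0 ∧
      (deriv (fun v => X₁ u v) v) ^ 2 + (deriv (fun v => X₂ u v) v) ^ 2
          + (deriv (fun v => X₃ u v) v) ^ 2 = C * (Real.cosh u) ^ 6 := by
  obtain rfl : X₁ = fun u v => (√C / 3) * cosh u ^ 3 * cos (3 * v) := funext₂ h₁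
  obtain rfl : X₂ = fun u v => (√C / 3) * cosh u ^ 3 * sin (3 * v) := funext₂ h₂
  obtain rfl : X₃ = fun u _ => (√C / 2) * (1 / 2 * sinh (2 * u) + u) := funext₂ h₃
  intro u v
  beta_reduce
  have hf : HasDerivAt (fun u => (√C / 3) * cosh u ^ 3) (√C * cosh u ^ 2 * sinh u) u :=
    (((hasDerivAt_cosh u).pow 3).const_mul (√C / 3)).congr_deriv (by ring)
  have hh : HasDerivAt (fun u => (√C / 2) * (1 / 2 * sinh (2 * u) + u)) (√C * cosh u ^ 2) u :=
    ((hasDerivAt_sinh_two_mul_div_two_add_id u).const_mul (√C / 2)).congr_deriv (by ring)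
  have hsqrt : √C ^ 2 = C := sq_sqrt hC.le
  refine ⟨?_, rotationSurface_metric_uv _ 3 v hf.differentiableAt,
    (rotationSurface_metric_vv 3 v _ _).trans ?_⟩
  · rw [rotationSurface_metric_uu _ 3 v hf.differentiableAt, hf.deriv, hh.deriv]
    linear_combination (√C ^ 2 * cosh u ^ 4) * (cosh_sq u).symm + cosh u ^ 6 * hsqrt
  · linear_combination cosh u ^ 6 * hsqrt
end

section
/- Let T(ξ) = −ξ^{8/3} + 3Cξ² − 3 for ξ > 0, with C > 4/3^{3/2}. Then T has exactly two positive zeros ξ₀₁ ∈ (0, (9C/4)^{3/2}) and ξ₀₂ ∈ ((9C/4)^{3/2}, ∞), and T(ξ) > 0 for all ξ ∈ (ξ₀₁, ξ₀₂). -/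
/-!
`T` increases on `[0, m]` and decreases on `[m, ∞)`, where `m = (9C/4)^{3/2}` is the zero of
`T'(ξ) = 2ξ (3C - (4/3) ξ^{2/3})`. Writing `ξ = a^{3/2}` gives `T ξ = a³ (3C - a) - 3`, so
`T 0 = -3`, `T m = (3^7/2^8) C⁴ - 3 > 0` exactly when `C > 4/3^{3/2}`, and `T ((3C)^{3/2}) = -3`.
The intermediate value theorem and strict monotonicity on each side of `m` then give exactly one
zero on each side, with `T > 0` between them.
-/

open Real Set

theorem exists_two_zeros_of_strictMonoOn_of_strictAntiOn {f : ℝ → ℝ} {a m b : ℝ}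
    (hf : ContinuousOn f (Icc a b)) (hmono : StrictMonoOn f (Icc a m))
    (hanti : StrictAntiOn f (Ici m)) (ham : a ≤ m) (hmb : m ≤ b)
    (ha : f a < 0) (hm : 0 < f m) (hb : f b < 0) :
    ∃ x₁ x₂, a < x₁ ∧ x₁ < m ∧ m < x₂ ∧ f x₁ = 0 ∧ f x₂ = 0 ∧
      (∀ x ∈ Ioo x₁ x₂, 0 < f x) ∧ ∀ x, a ≤ x → f x = 0 → x = x₁ ∨ x = x₂ := by
  obtain ⟨x₁, ⟨hax₁, hx₁m⟩, hfx₁⟩ :=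
    intermediate_value_Ioo ham (hf.mono (Icc_subset_Icc_right hmb)) ⟨ha, hm⟩
  obtain ⟨x₂, ⟨hmx₂, hx₂b⟩, hfx₂⟩ :=
    intermediate_value_Ioo' hmb (hf.mono (Icc_subset_Icc_left ham)) ⟨hb, hm⟩
  have hx₁ : x₁ ∈ Icc a m := ⟨hax₁.le, hx₁m.le⟩
  have hx₂ : x₂ ∈ Ici m := hmx₂.le
  refine ⟨x₁, x₂, hax₁, hx₁m, hmx₂, hfx₁, hfx₂, fun x ⟨hx₁x, hxx₂⟩ => ?_, fun x hax hfx => ?_⟩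
  · rcases le_or_gt x m with hxm | hmx
    · exact hfx₁ ▸ hmono hx₁ ⟨hax₁.le.trans hx₁x.le, hxm⟩ hx₁x
    · exact hfx₂ ▸ hanti hmx.le hx₂ hxx₂
  · rcases le_or_gt x m with hxm | hmx
    · exact .inl (hmono.injOn ⟨hax, hxm⟩ hx₁ (hfx.trans hfx₁.symm))
    · exact .inr (hanti.injOn hmx.le hx₂ (hfx.trans hfx₂.symm))

noncomputable def tFun (C ξ : ℝ) : ℝ := -ξ ^ ((8:ℝ)/3) + 3 * C * ξ ^ 2 - 3

namespace tFun

variable {C : ℝ}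

theorem continuous (C : ℝ) : Continuous (tFun C) := by
  have h83 : Continuous fun ξ : ℝ => ξ ^ ((8:ℝ)/3) :=
    continuous_id.rpow_const fun _ => .inr (by norm_num)
  unfold tFun
  fun_prop

theorem hasDerivAt {ξ : ℝ} (hξ : 0 < ξ) :
    HasDerivAt (tFun C) (2 * ξ * (3 * C - 4 / 3 * ξ ^ ((2:ℝ)/3))) ξ := by
  have h83 : HasDerivAt (fun x : ℝ => x ^ ((8:ℝ)/3)) ((8:ℝ)/3 * ξ ^ ((8:ℝ)/3 - 1)) ξ :=
    hasDerivAt_rpow_const (.inl hξ.ne')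
  refine ((h83.neg.add ((hasDerivAt_pow 2 ξ).const_mul (3 * C))).sub_const 3).congr_deriv ?_
  rw [show (8:ℝ)/3 - 1 = 1 + 2/3 by norm_num, rpow_add hξ, rpow_one]
  push_cast
  ring

theorem eq_rpow_three_halves {a : ℝ} (ha : 0 ≤ a) :
    tFun C (a ^ ((3:ℝ)/2)) = a ^ 3 * (3 * C - a) - 3 := by
  have hpow : ∀ p : ℝ, (a ^ ((3:ℝ)/2)) ^ p = a ^ (3 / 2 * p) := fun p => (rpow_mul ha _ _).symm
  have h2 : (a ^ ((3:ℝ)/2)) ^ 2 = a ^ 3 := by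
    rw [← rpow_natCast, hpow]; norm_num
  rw [tFun, hpow, h2, show (3:ℝ)/2 * (8/3) = (4:ℕ) by norm_num, rpow_natCast]
  ring

theorem strictMonoOn (hC : 0 ≤ C) : StrictMonoOn (tFun C) (Icc 0 ((9 * C / 4) ^ ((3:ℝ)/2))) := by
  refine strictMonoOn_of_deriv_pos (convex_Icc _ _) (continuous C).continuousOn fun ξ hξ => ?_
  rw [interior_Icc] at hξ
  rw [(hasDerivAt hξ.1).deriv]
  have : ξ ^ ((2:ℝ)/3) < 9 * C / 4 := by
    simpa [← rpow_mul (by positivity : 0 ≤ 9 * C / 4)] using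
      rpow_lt_rpow hξ.1.le hξ.2 (by norm_num : (0:ℝ) < 2/3)
  nlinarith [hξ.1]

theorem strictAntiOn (hC : 0 ≤ C) : StrictAntiOn (tFun C) (Ici ((9 * C / 4) ^ ((3:ℝ)/2))) := by
  refine strictAntiOn_of_deriv_neg (convex_Ici _) (continuous C).continuousOn fun ξ hξ => ?_
  rw [interior_Ici] at hξ
  have hξ0 : 0 < ξ := lt_of_le_of_lt (by positivity) hξ
  rw [(hasDerivAt hξ0).deriv]
  have : 9 * C / 4 < ξ ^ ((2:ℝ)/3) := by
    simpa [← rpow_mul (by positivity : 0 ≤ 9 * C / 4)] using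
      rpow_lt_rpow (by positivity) hξ (by norm_num : (0:ℝ) < 2/3)
  nlinarith

end tFun

theorem pow_four_gt_of_four_div_rpow_lt {C : ℝ} (hC : 4 / (3:ℝ) ^ ((3:ℝ)/2) < C) :
    256 / 729 < C ^ 4 := by
  have h3 : ((3:ℝ) ^ ((3:ℝ)/2)) ^ 4 = 729 := by
    rw [← rpow_natCast, ← rpow_mul (by norm_num)]; norm_num
  calc (256:ℝ) / 729 = (4 / (3:ℝ) ^ ((3:ℝ)/2)) ^ 4 := by rw [div_pow, h3]; norm_num
    _ < C ^ 4 := pow_lt_pow_left₀ hC (by positivity) (by norm_num)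

/-- `T(ξ) = −ξ^{8/3} + 3Cξ² − 3` on `(0,∞)`, with `C > 4/3^{3/2}`, has
exactly two positive zeros `ξ₀₁ ∈ (0, (9C/4)^{3/2})` and `ξ₀₂ ∈ ((9C/4)^{3/2}, ∞)`,
and `T > 0` on `(ξ₀₁, ξ₀₂)`. -/
theorem T_two_zeros (C : ℝ) (hC : C > 4 / (3:ℝ) ^ ((3:ℝ)/2))
    (T : ℝ → ℝ)
    (hT : ∀ ξ, T ξ = -ξ ^ ((8:ℝ)/3) + 3 * C * ξ ^ 2 - 3) :
    ∃ ξ₀₁ ξ₀₂ : ℝ,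
      0 < ξ₀₁ ∧ ξ₀₁ < (9 * C / 4) ^ ((3:ℝ)/2) ∧ (9 * C / 4) ^ ((3:ℝ)/2) < ξ₀₂ ∧
      T ξ₀₁ = 0 ∧ T ξ₀₂ = 0 ∧
      (∀ ξ ∈ Ioo ξ₀₁ ξ₀₂, 0 < T ξ) ∧
      (∀ ξ : ℝ, 0 < ξ → T ξ = 0 → ξ = ξ₀₁ ∨ ξ = ξ₀₂) := by
  obtain rfl : T = tFun C := funext hT
  have hC0 : 0 < C := lt_trans (by positivity) hC
  have hC4 := pow_four_gt_of_four_div_rpow_lt hC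
  have hpeak : 0 < tFun C ((9 * C / 4) ^ ((3:ℝ)/2)) := by
    rw [tFun.eq_rpow_three_halves (by positivity)]
    nlinarith
  have hfar : tFun C ((3 * C) ^ ((3:ℝ)/2)) < 0 := by
    rw [tFun.eq_rpow_three_halves (by positivity)]
    norm_num
  have hzero : tFun C 0 < 0 := by norm_num [tFun]
  obtain ⟨ξ₀₁, ξ₀₂, h0, h1, h2, h3, h4, hpos, honly⟩ :=
    exists_two_zeros_of_strictMonoOn_of_strictAntiOn (tFun.continuous C).continuousOn
      (tFun.strictMonoOn hC0.le) (tFun.strictAntiOn hC0.le) (by positivity)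
      (rpow_le_rpow (by positivity) (by linarith) (by norm_num)) hzero hpeak hfar
  exact ⟨ξ₀₁, ξ₀₂, h0, h1, h2, h3, h4, hpos, fun ξ hξ => honly ξ hξ.le⟩
end

section
/- Let C > 4/3^{3/2} and 0 < C* < (C − 4/3^{3/2})^{−1/2}. Then 3ξ² − (C*)²·(−ξ^{8/3} + 3Cξ² − 3) > 0 for all ξ ∈ (ξ₀₁, ξ₀₂), where ξ₀₁ < ξ₀₂ are the positive zeros of −ξ^{8/3} + 3Cξ² − 3. -/
/-!
Put `u = ξ^{2/3}`. The bound `4u³ ≤ √3 (u⁴ + 3)`, with equality at `u = √3`, reads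
`3 · (4 / 3^{3/2}) · ξ² ≤ ξ^{8/3} + 3`, i.e. `T(ξ) ≤ 3ξ² (C − 4/3^{3/2})`.
Since `C*² < (C − 4/3^{3/2})⁻¹` and `T(ξ) > 0` on the interval, `C*² T(ξ) < 3ξ²`.
-/

open Real Set

lemma four_mul_pow_three_le_sqrt_three_mul (u : ℝ) : 4 * u ^ 3 ≤ √3 * (u ^ 4 + 3) := by
  have hs : √3 ^ 2 = 3 := sq_sqrt (by norm_num)
  have hquad : 0 ≤ 3 * u ^ 2 + 2 * √3 * u + 3 := by nlinarith [sq_nonneg (√3 * u + 1)]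
  have hfactor : 0 ≤ √3 * (u - √3) ^ 2 * (3 * u ^ 2 + 2 * √3 * u + 3) :=
    mul_nonneg (by positivity) hquad
  have hid : √3 * (u - √3) ^ 2 * (3 * u ^ 2 + 2 * √3 * u + 3)
      = 3 * (√3 * (u ^ 4 + 3)) - 12 * u ^ 3 := by
    linear_combination (-4 * u ^ 3 - √3 * u ^ 2 + 2 * √3 ^ 2 * u + 3 * √3) * hs
  linarith

lemma rpow_three_halves_three : (3 : ℝ) ^ ((3 : ℝ) / 2) = 3 * √3 := by
  rw [show (3 : ℝ) / 2 = 1 + 1 / 2 by norm_num, rpow_add (by norm_num), rpow_one,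
    ← sqrt_eq_rpow]

lemma three_mul_mul_sq_le_rpow_add_three {ξ : ℝ} (hξ : 0 ≤ ξ) :
    3 * (4 / (3 : ℝ) ^ ((3 : ℝ) / 2)) * ξ ^ 2 ≤ ξ ^ ((8 : ℝ) / 3) + 3 := by
  set u := ξ ^ ((2 : ℝ) / 3)
  have hu3 : u ^ 3 = ξ ^ 2 := by
    rw [← rpow_natCast, ← rpow_mul hξ]; norm_num
  have hu4 : u ^ 4 = ξ ^ ((8 : ℝ) / 3) := by
    rw [← rpow_natCast, ← rpow_mul hξ]; norm_num
  have hs : 0 < √3 := by positivity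
  rw [rpow_three_halves_three, ← hu3, ← hu4,
    show 3 * (4 / (3 * √3)) * u ^ 3 = 4 * u ^ 3 / √3 by field_simp, div_le_iff₀ hs]
  linarith [four_mul_pow_three_le_sqrt_three_mul u]

lemma sq_lt_inv_of_lt_rpow_neg_half {x a : ℝ} (hx : 0 ≤ x) (ha : 0 < a)
    (h : x < a ^ (-(1 : ℝ) / 2)) : x ^ 2 < a⁻¹ := by
  calc x ^ 2 < (a ^ (-(1 : ℝ) / 2)) ^ 2 := pow_lt_pow_left₀ h hx two_ne_zero
    _ = a⁻¹ := by
      rw [← rpow_natCast, ← rpow_mul ha.le, ← rpow_neg_one]; norm_num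

theorem Cstar_inequality_general (C Cstar : ℝ) (hC : C > 4 / (3:ℝ) ^ ((3:ℝ)/2))
    (hCs : 0 < Cstar) (hCs' : Cstar < (C - 4 / (3:ℝ) ^ ((3:ℝ)/2)) ^ (-(1:ℝ)/2))
    (ξ₀₁ ξ₀₂ : ℝ) (h01 : 0 < ξ₀₁)
    (hpos : ∀ ξ ∈ Ioo ξ₀₁ ξ₀₂, 0 < -ξ ^ ((8:ℝ)/3) + 3 * C * ξ ^ 2 - 3) :
    ∀ ξ ∈ Ioo ξ₀₁ ξ₀₂,
      0 < 3 * ξ ^ 2 - Cstar ^ 2 * (-ξ ^ ((8:ℝ)/3) + 3 * C * ξ ^ 2 - 3) := by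
  intro ξ hξ
  set c₀ : ℝ := 4 / (3:ℝ) ^ ((3:ℝ)/2)
  have hgap : 0 < C - c₀ := sub_pos.mpr hC
  have hT := hpos ξ hξ
  have hT_le : -ξ ^ ((8:ℝ)/3) + 3 * C * ξ ^ 2 - 3 ≤ (C - c₀) * (3 * ξ ^ 2) := by
    linarith [three_mul_mul_sq_le_rpow_add_three (h01.trans hξ.1).le]
  have hCs2 : Cstar ^ 2 < (C - c₀)⁻¹ := sq_lt_inv_of_lt_rpow_neg_half hCs.le hgap hCs'
  refine sub_pos.mpr ?_
  calc Cstar ^ 2 * (-ξ ^ ((8:ℝ)/3) + 3 * C * ξ ^ 2 - 3)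
      < (C - c₀)⁻¹ * (-ξ ^ ((8:ℝ)/3) + 3 * C * ξ ^ 2 - 3) := by gcongr
    _ ≤ 3 * ξ ^ 2 := (inv_mul_le_iff₀ hgap).mpr hT_le

/-- if `C > 4/3^{3/2}` and `0 < C* < (C − 4/3^{3/2})^{−1/2}`, then
`3ξ² − (C*)²(−ξ^{8/3} + 3Cξ² − 3) > 0` for all `ξ` between the positive zeros
`ξ₀₁ < ξ₀₂` of `−ξ^{8/3} + 3Cξ² − 3`. -/
theorem Cstar_inequality (C Cstar : ℝ) (hC : C > 4 / (3:ℝ) ^ ((3:ℝ)/2))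
    (hCs : 0 < Cstar) (hCs' : Cstar < (C - 4 / (3:ℝ) ^ ((3:ℝ)/2)) ^ (-(1:ℝ)/2))
    (ξ₀₁ ξ₀₂ : ℝ) (h01 : 0 < ξ₀₁) (h12 : ξ₀₁ < ξ₀₂)
    (hz1 : -ξ₀₁ ^ ((8:ℝ)/3) + 3 * C * ξ₀₁ ^ 2 - 3 = 0)
    (hz2 : -ξ₀₂ ^ ((8:ℝ)/3) + 3 * C * ξ₀₂ ^ 2 - 3 = 0)
    (hpos : ∀ ξ ∈ Ioo ξ₀₁ ξ₀₂, 0 < -ξ ^ ((8:ℝ)/3) + 3 * C * ξ ^ 2 - 3) :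
    ∀ ξ ∈ Ioo ξ₀₁ ξ₀₂,
      0 < 3 * ξ ^ 2 - Cstar ^ 2 * (-ξ ^ ((8:ℝ)/3) + 3 * C * ξ ^ 2 - 3) :=
  Cstar_inequality_general C Cstar hC hCs hCs' ξ₀₁ ξ₀₂ h01 hpos
end

section
/- The Gaussian curvature of the metric g_C = 3/(ξ²(−ξ^{8/3}+3Cξ²−3)) dξ² + (1/ξ²) dθ² on D_C = (ξ₀₁,ξ₀₂) × ℝ equals K(ξ) = 1 − (1/9)ξ^{8/3}; in particular 1 − K = (1/9)ξ^{8/3} > 0, K'(ξ) = −(8/27)ξ^{5/3} < 0, and K does not depend on C. -/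
/-!
For `E = c/(ξ²P)` and `G = 1/ξ²` one has `G'/√(EG) = -(2/√c) √P/ξ`, and the curvature formula
collapses to `K = (ξP' - 2P)/(2c)`. For `P = -ξ^{8/3} + 3Cξ² - 3` the operator `ξ d/dξ - 2`
annihilates the `Cξ²` term, which is why `K = 1 - ξ^{8/3}/9` does not depend on `C`.
-/

open Real Set Filter Topology

/-- Gaussian curvature of `E dξ² + G dθ²` with `E`, `G` depending on `ξ` only. -/
noncomputable def orthogonalCurvature (E G : ℝ → ℝ) (ξ : ℝ) : ℝ :=
  -(1 / (2 * √(E ξ * G ξ))) * deriv (fun ξ => deriv G ξ / √(E ξ * G ξ)) ξ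

lemma hasDerivAt_one_div_sq {y : ℝ} (hy : y ≠ 0) :
    HasDerivAt (fun y : ℝ => 1 / y ^ 2) (-2 / y ^ 3) y := by
  refine ((hasDerivAt_const y (1 : ℝ)).div (hasDerivAt_pow 2 y) (pow_ne_zero 2 hy)).congr_deriv ?_
  field_simp
  ring

lemma sqrt_div_sq_mul_one_div_sq {c p y : ℝ} (hc : 0 ≤ c) (hp : 0 < p) (hy : y ≠ 0) :
    √(c / (y ^ 2 * p) * (1 / y ^ 2)) = √c / (y ^ 2 * √p) := by
  have hsp : 0 < √p := sqrt_pos.mpr hp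
  rw [← sqrt_sq (by positivity : 0 ≤ √c / (y ^ 2 * √p)), div_pow, mul_pow, sq_sqrt hc,
    sq_sqrt hp.le]
  congr 1
  field_simp

variable {c : ℝ} {P : ℝ → ℝ}

lemma deriv_one_div_sq_div_sqrt_eq (hc : 0 < c) {y : ℝ} (hy : 0 < y) (hPy : 0 < P y) :
    deriv (fun ξ : ℝ => 1 / ξ ^ 2) y / √(c / (y ^ 2 * P y) * (1 / y ^ 2)) =
      -(2 / √c) * (√(P y) / y) := by
  have hsc : 0 < √c := sqrt_pos.mpr hc
  have hsp : 0 < √(P y) := sqrt_pos.mpr hPy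
  rw [(hasDerivAt_one_div_sq hy.ne').deriv, sqrt_div_sq_mul_one_div_sq hc.le hPy hy.ne']
  field_simp

theorem orthogonalCurvature_of_inv_sq (hc : 0 < c) {x P' : ℝ} (hx : 0 < x)
    (hP : ∀ᶠ y in 𝓝 x, 0 < P y) (hP' : HasDerivAt P P' x) :
    orthogonalCurvature (fun ξ => c / (ξ ^ 2 * P ξ)) (fun ξ => 1 / ξ ^ 2) x =
      (x * P' - 2 * P x) / (2 * c) := by
  have hPx : 0 < P x := hP.self_of_nhds
  have hsc : 0 < √c := sqrt_pos.mpr hc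
  have hsp : 0 < √(P x) := sqrt_pos.mpr hPx
  have hinner : (fun ξ => deriv (fun ξ : ℝ => 1 / ξ ^ 2) ξ / √(c / (ξ ^ 2 * P ξ) * (1 / ξ ^ 2)))
      =ᶠ[𝓝 x] fun ξ => -(2 / √c) * (√(P ξ) / ξ) := by
    filter_upwards [hP, lt_mem_nhds hx] with y hPy hy using deriv_one_div_sq_div_sqrt_eq hc hy hPy
  have hderiv : HasDerivAt (fun ξ => -(2 / √c) * (√(P ξ) / ξ))
      (-(2 / √c) * ((P' / (2 * √(P x)) * x - √(P x)) / x ^ 2)) x := by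
    simpa using ((hP'.sqrt hPx.ne').div (hasDerivAt_id x) hx.ne').const_mul (-(2 / √c))
  rw [orthogonalCurvature, hinner.deriv_eq, hderiv.deriv,
    sqrt_div_sq_mul_one_div_sq hc.le hPx hx.ne']
  field_simp
  rw [sq_sqrt hPx.le, sq_sqrt hc.le]
  ring

lemma hasDerivAt_rpow_eight_thirds {x : ℝ} (hx : x ≠ 0) :
    HasDerivAt (fun x : ℝ => x ^ ((8:ℝ)/3)) (8/3 * x ^ ((5:ℝ)/3)) x := by
  convert Real.hasDerivAt_rpow_const (p := (8:ℝ)/3) (Or.inl hx) using 3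
  norm_num

lemma hasDerivAt_gC_profile (C : ℝ) {x : ℝ} (hx : x ≠ 0) :
    HasDerivAt (fun x : ℝ => -x ^ ((8:ℝ)/3) + 3 * C * x ^ 2 - 3)
      (-(8/3 * x ^ ((5:ℝ)/3)) + 6 * C * x) x := by
  refine (((hasDerivAt_rpow_eight_thirds hx).neg.add
    ((hasDerivAt_pow 2 x).const_mul (3 * C))).sub_const 3).congr_deriv ?_
  norm_num
  ring

lemma mul_rpow_five_thirds {x : ℝ} (hx : x ≠ 0) : x * x ^ ((5:ℝ)/3) = x ^ ((8:ℝ)/3) := by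
  rw [mul_comm, ← Real.rpow_add_one hx]
  norm_num

theorem gC_sphere_curvature_general (C : ℝ)
    (ξ₀₁ ξ₀₂ : ℝ) (h01 : 0 < ξ₀₁)
    (hpos : ∀ ξ ∈ Ioo ξ₀₁ ξ₀₂, 0 < -ξ ^ ((8:ℝ)/3) + 3 * C * ξ ^ 2 - 3)
    (E G K : ℝ → ℝ)
    (hE : ∀ ξ, E ξ = 3 / (ξ ^ 2 * (-ξ ^ ((8:ℝ)/3) + 3 * C * ξ ^ 2 - 3)))
    (hG : ∀ ξ, G ξ = 1 / ξ ^ 2)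
    (hK : ∀ ξ, K ξ = -(1 / (2 * Real.sqrt (E ξ * G ξ))) *
      deriv (fun ξ => deriv G ξ / Real.sqrt (E ξ * G ξ)) ξ) :
    ∀ ξ ∈ Ioo ξ₀₁ ξ₀₂,
      K ξ = 1 - ξ ^ ((8:ℝ)/3) / 9 ∧
      0 < 1 - K ξ ∧
      deriv K ξ = -(8/27) * ξ ^ ((5:ℝ)/3) ∧
      deriv K ξ < 0 := by
  have hK' : K = orthogonalCurvature E G := funext hK
  have hE' : E = fun ξ => 3 / (ξ ^ 2 * (-ξ ^ ((8:ℝ)/3) + 3 * C * ξ ^ 2 - 3)) := funext hE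
  have hG' : G = fun ξ => 1 / ξ ^ 2 := funext hG
  have hcurv : ∀ x ∈ Ioo ξ₀₁ ξ₀₂, K x = 1 - x ^ ((8:ℝ)/3) / 9 := by
    intro x hx
    have hx0 : 0 < x := h01.trans hx.1
    have hP : ∀ᶠ y in 𝓝 x, 0 < -y ^ ((8:ℝ)/3) + 3 * C * y ^ 2 - 3 := by
      filter_upwards [isOpen_Ioo.mem_nhds hx] using hpos
    rw [hK', hE', hG']
    refine (orthogonalCurvature_of_inv_sq three_pos hx0 hP
      (hasDerivAt_gC_profile C hx0.ne')).trans ?_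
    rw [mul_add, ← mul_rpow_five_thirds hx0.ne']
    ring
  intro ξ hξ
  have hξ0 : 0 < ξ := h01.trans hξ.1
  have hKξ := hcurv ξ hξ
  have hK'ξ : deriv K ξ = -(8/27) * ξ ^ ((5:ℝ)/3) := by
    have hmodel := ((hasDerivAt_rpow_eight_thirds hξ0.ne').div_const 9).const_sub 1
    rw [(eventuallyEq_of_mem (isOpen_Ioo.mem_nhds hξ) hcurv).deriv_eq, hmodel.deriv]
    ring
  have h83 : 0 < ξ ^ ((8:ℝ)/3) := rpow_pos_of_pos hξ0 _
  have h53 : 0 < ξ ^ ((5:ℝ)/3) := rpow_pos_of_pos hξ0 _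
  exact ⟨hKξ, by rw [hKξ]; linarith, hK'ξ, by rw [hK'ξ]; linarith⟩

/-- for the metric `g_C = 3/(ξ²(−ξ^{8/3}+3Cξ²−3)) dξ² + (1/ξ²) dθ²` on
`D_C = (ξ₀₁,ξ₀₂) × ℝ`, the Gaussian curvature, computed by the orthogonal-metric formula
`K = −(1/(2√(EG))) d/dξ (G'/√(EG))`, equals `1 − ξ^{8/3}/9`; hence `1 − K = ξ^{8/3}/9 > 0`
and `K'(ξ) = −(8/27)ξ^{5/3} < 0` (independently of `C`). -/
theorem gC_sphere_curvature (C : ℝ) (hC : C > 4 / (3:ℝ) ^ ((3:ℝ)/2))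
    (ξ₀₁ ξ₀₂ : ℝ) (h01 : 0 < ξ₀₁) (h12 : ξ₀₁ < ξ₀₂)
    (hz1 : -ξ₀₁ ^ ((8:ℝ)/3) + 3 * C * ξ₀₁ ^ 2 - 3 = 0)
    (hz2 : -ξ₀₂ ^ ((8:ℝ)/3) + 3 * C * ξ₀₂ ^ 2 - 3 = 0)
    (hpos : ∀ ξ ∈ Ioo ξ₀₁ ξ₀₂, 0 < -ξ ^ ((8:ℝ)/3) + 3 * C * ξ ^ 2 - 3)
    (E G K : ℝ → ℝ)
    (hE : ∀ ξ, E ξ = 3 / (ξ ^ 2 * (-ξ ^ ((8:ℝ)/3) + 3 * C * ξ ^ 2 - 3)))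
    (hG : ∀ ξ, G ξ = 1 / ξ ^ 2)
    (hK : ∀ ξ, K ξ = -(1 / (2 * Real.sqrt (E ξ * G ξ))) *
      deriv (fun ξ => deriv G ξ / Real.sqrt (E ξ * G ξ)) ξ) :
    ∀ ξ ∈ Ioo ξ₀₁ ξ₀₂,
      K ξ = 1 - ξ ^ ((8:ℝ)/3) / 9 ∧
      0 < 1 - K ξ ∧
      deriv K ξ = -(8/27) * ξ ^ ((5:ℝ)/3) ∧
      deriv K ξ < 0 :=
  gC_sphere_curvature_general C ξ₀₁ ξ₀₂ h01 hpos E G K hE hG hK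
end
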